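/- arXiv:1602.07118 — 4 statements merged into one kernel-verified Lean document; each statement's English description precedes it below -/
import Mathlib

section
/- Let (X, d) be a metric space and S ⊆ X. Then the following statements are equivalent: (i) S is σ-discrete; (ii) there exists a sequence of separated sets S_n, pairwise disjoint, with S = ⋃_{n=1}^∞ S_n; (iii) for every sequence of positive numbers (ε_n) converging to 0 there exists a sequence of pairwise disjoint sets S_n such that S_n is ε_n-separated for every n and S = ⋃_{n=1}^∞ S_n; (iv) there exists a sequence of sets S_n, each closed in X and discrete, with S = ⋃_{n=1}^∞ S_n. -/
open Filter

/-- A set `S` is discrete in the ambient space `X` if every point of `S` has a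
neighborhood in `X` meeting `S` only in that point. -/
def IsDiscreteIn {X : Type*} [TopologicalSpace X] (S : Set X) : Prop :=
  ∀ x ∈ S, ∃ U ∈ nhds x, U ∩ S = {x}

/-- A set is σ-discrete if it is a countable union of discrete sets. -/
def IsSigmaDiscrete {X : Type*} [TopologicalSpace X] (S : Set X) : Prop :=
  ∃ T : ℕ → Set X, (∀ n, IsDiscreteIn (T n)) ∧ S = ⋃ n, T n

/-- An `ε`-separated set is closed. -/
lemma isClosed_of_separated {X : Type*} [MetricSpace X] {T : Set X} {ε : ℝ} (hε : 0 < ε)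
    (hsep : ∀ s ∈ T, ∀ t ∈ T, s ≠ t → ε ≤ dist s t) : IsClosed T := by
  rw [← isOpen_compl_iff]
  rw [Metric.isOpen_iff]
  intro x hx
  by_cases h : ∃ t ∈ T, dist x t < ε / 2
  · obtain ⟨t, htT, hxt⟩ := h
    have hxt0 : 0 < dist x t := by
      rw [dist_pos]; rintro rfl; exact hx htT
    refine ⟨min (ε / 2) (dist x t), lt_min (by linarith) hxt0, ?_⟩
    intro y hy hyT
    have hy1 : dist y x < ε / 2 := lt_of_lt_of_le hy (min_le_left _ _)
    have hy2 : dist y x < dist x t := lt_of_lt_of_le hy (min_le_right _ _)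
    have hyt : y ≠ t := by
      rintro rfl
      rw [dist_comm] at hy2
      exact lt_irrefl _ hy2
    have := hsep y hyT t htT hyt
    have : dist y t ≤ dist y x + dist x t := dist_triangle _ _ _
    have hxt' : dist x t < ε / 2 := hxt
    have hsep' := hsep y hyT t htT hyt
    linarith
  · push_neg at h
    refine ⟨ε / 2, by linarith, ?_⟩
    intro y hy hyT
    have h1 := h y hyT
    rw [Metric.mem_ball] at hy
    rw [dist_comm] at h1
    linarith

/-- An `ε`-separated set is discrete in the ambient space. -/
lemma isDiscreteIn_of_separated {X : Type*} [MetricSpace X] {T : Set X} {ε : ℝ} (hε : 0 < ε)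
    (hsep : ∀ s ∈ T, ∀ t ∈ T, s ≠ t → ε ≤ dist s t) : IsDiscreteIn T := by
  intro x hx
  refine ⟨Metric.ball x ε, Metric.ball_mem_nhds x hε, ?_⟩
  ext y
  simp only [Set.mem_inter_iff, Metric.mem_ball, Set.mem_singleton_iff]
  constructor
  · rintro ⟨hyb, hyT⟩
    by_contra hne
    exact absurd hyb (not_lt.mpr (hsep y hyT x hx hne))
  · rintro rfl
    exact ⟨by simpa using hε, hx⟩

/-- For a metric space `X` and `S ⊆ X` the following are equivalent:
(i) `S` is σ-discrete;
(ii) `S` is a union of a pairwise disjoint sequence of separated sets;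
(iii) for every sequence of positive numbers `ε n → 0` there is a pairwise disjoint
sequence of sets `S n`, with `S n` being `ε n`-separated, whose union is `S`;
(iv) `S` is a countable union of sets that are closed in `X` and discrete. -/
theorem sigma_discrete_tfae {X : Type*} [MetricSpace X] (S : Set X) :
    List.TFAE
      [ IsSigmaDiscrete S
      , ∃ T : ℕ → Set X,
          (∀ n, ∃ ε : ℝ, 0 < ε ∧ ∀ s ∈ T n, ∀ t ∈ T n, s ≠ t → ε ≤ dist s t) ∧
          Pairwise (Function.onFun Disjoint T) ∧ S = ⋃ n, T n
      , ∀ ε : ℕ → ℝ, (∀ n, 0 < ε n) → Tendsto ε atTop (nhds 0) →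
          ∃ T : ℕ → Set X,
            (∀ n, ∀ s ∈ T n, ∀ t ∈ T n, s ≠ t → ε n ≤ dist s t) ∧
            Pairwise (Function.onFun Disjoint T) ∧ S = ⋃ n, T n
      , ∃ T : ℕ → Set X,
          (∀ n, IsClosed (T n) ∧ IsDiscreteIn (T n)) ∧ S = ⋃ n, T n ] := by
  tfae_have 1 → 3
  | ⟨D, hD, hSD⟩ => by
    intro ε hεpos hεto
    classical
    set e : ℕ ≃ ℕ × ℕ := Nat.pairEquiv.symm with he
    -- for x ∈ S, least m with x ∈ D m
    have hmem : ∀ x ∈ S, ∃ m, x ∈ D m := by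
      intro x hx
      rw [hSD] at hx
      simpa using hx
    set M : X → ℕ := fun x => if h : ∃ m, x ∈ D m then Nat.find h else 0 with hM
    have hMmem : ∀ x ∈ S, x ∈ D (M x) := by
      intro x hx
      have h := hmem x hx
      simp only [hM, dif_pos h]
      exact Nat.find_spec h
    -- choose separating radii
    have hrex : ∀ x : X, ∃ r : ℝ, x ∈ S → (0 < r ∧ ∀ y ∈ D (M x), y ≠ x → r ≤ dist x y) := by
      intro x
      by_cases hx : x ∈ S
      · obtain ⟨U, hU, hUx⟩ := hD (M x) x (hMmem x hx)
        obtain ⟨r, hr, hball⟩ := Metric.mem_nhds_iff.mp hU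
        refine ⟨r, fun _ => ⟨hr, fun y hy hyx => ?_⟩⟩
        by_contra hlt
        push_neg at hlt
        have : y ∈ Metric.ball x r := by rw [Metric.mem_ball, dist_comm]; exact hlt
        have : y ∈ U ∩ D (M x) := ⟨hball this, hy⟩
        rw [hUx] at this
        exact hyx this
      · exact ⟨1, fun h => absurd h hx⟩
    choose R hR using hrex
    -- for x ∈ S, there is n with (e n).1 = M x and ε n ≤ R x
    have hNex : ∀ x ∈ S, ∃ n, (e n).1 = M x ∧ ε n ≤ R x := by
      intro x hx
      obtain ⟨hRpos, -⟩ := hR x hx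
      have hev : ∀ᶠ n in atTop, ε n < R x := hεto.eventually (gt_mem_nhds hRpos)
      obtain ⟨N0, hN0⟩ := eventually_atTop.mp hev
      have hinj : Function.Injective (fun k => e.symm (M x, k)) := by
        intro a b hab
        have := e.symm.injective hab
        exact (Prod.mk.injEq _ _ _ _).mp this |>.2
      obtain ⟨n, hn, hn2⟩ := (Set.infinite_range_of_injective hinj).exists_gt N0
      obtain ⟨k, hk⟩ := hn
      refine ⟨n, ?_, le_of_lt (hN0 n (le_of_lt hn2))⟩
      rw [← hk]
      simp
    set N : X → ℕ := fun x =>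
      if h : ∃ n, (e n).1 = M x ∧ ε n ≤ R x then Nat.find h else 0 with hN
    have hNspec : ∀ x ∈ S, (e (N x)).1 = M x ∧ ε (N x) ≤ R x := by
      intro x hx
      have h := hNex x hx
      simp only [hN, dif_pos h]
      exact Nat.find_spec h
    refine ⟨fun n => {x | x ∈ S ∧ N x = n}, ?_, ?_, ?_⟩
    · rintro n s ⟨hsS, hsN⟩ t ⟨htS, htN⟩ hst
      obtain ⟨hs1, hs2⟩ := hNspec s hsS
      obtain ⟨ht1, ht2⟩ := hNspec t htS
      have hMst : M s = M t := by rw [← hs1, ← ht1, hsN, htN]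
      have htD : t ∈ D (M s) := hMst ▸ hMmem t htS
      have := (hR s hsS).2 t htD (Ne.symm hst)
      calc ε n = ε (N s) := by rw [hsN]
        _ ≤ R s := hs2
        _ ≤ dist s t := this
    · intro i j hij
      simp only [Function.onFun, Set.disjoint_left]
      rintro x ⟨-, hxi⟩ ⟨-, hxj⟩
      exact hij (hxi ▸ hxj ▸ rfl)
    · ext x
      simp only [Set.mem_iUnion, Set.mem_setOf_eq]
      exact ⟨fun hx => ⟨N x, hx, rfl⟩, fun ⟨n, hx, _⟩ => hx⟩
  tfae_have 3 → 2
  | h3 => by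
    obtain ⟨T, hsep, hdisj, hunion⟩ := h3 (fun n => 1 / (n + 1 : ℝ))
      (fun n => by positivity) tendsto_one_div_add_atTop_nhds_zero_nat
    exact ⟨T, fun n => ⟨1 / (n + 1 : ℝ), by positivity, hsep n⟩, hdisj, hunion⟩
  tfae_have 2 → 4
  | ⟨T, hsep, hdisj, hunion⟩ => by
    refine ⟨T, fun n => ?_, hunion⟩
    obtain ⟨ε, hε, hsepn⟩ := hsep n
    exact ⟨isClosed_of_separated hε hsepn, isDiscreteIn_of_separated hε hsepn⟩
  tfae_have 4 → 1
  | ⟨T, hT, hunion⟩ => ⟨T, fun n => (hT n).2, hunion⟩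
  tfae_finish
end

section
/- Let X be a metrizable topological space, F a nonempty closed subset of X, and A a separable subset of X such that F ⊆ closure(A). Then there exists a sequence of points x_n ∈ A such that F is equal to the set ⋂_{n=1}^∞ closure({x_m : m ≥ n}) of all limit points of the sequence (x_n). -/
open TopologicalSpace Metric

/-- Let `X` be a metrizable topological space, `F` a nonempty closed
subset of `X`, and `A` a separable subset of `X` with `F ⊆ closure A`. Then there is a
sequence of points `x n ∈ A` such that `F` equals the set
`⋂ n, closure {x m : m ≥ n}` of all limit points of the sequence `(x n)`. -/
theorem exists_seq_limit_points_eq {X : Type*} [TopologicalSpace X]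
    [TopologicalSpace.MetrizableSpace X] (F A : Set X) (hF : F.Nonempty)
    (hFc : IsClosed F) (hA : TopologicalSpace.IsSeparable A) (hFA : F ⊆ closure A) :
    ∃ x : ℕ → X, (∀ n, x n ∈ A) ∧
      F = ⋂ n : ℕ, closure {y : X | ∃ m : ℕ, n ≤ m ∧ y = x m} := by
  letI : MetricSpace X := TopologicalSpace.metrizableSpaceMetric X
  have hFsep : TopologicalSpace.IsSeparable F := hA.closure.mono hFA
  haveI : SeparableSpace F := hFsep.separableSpace
  haveI : Nonempty F := hF.to_subtype
  set f : ℕ → X := fun k => (denseSeq F k : X) with hfdef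
  have hfF : ∀ k, f k ∈ F := fun k => (denseSeq F k).2
  have hdense : ∀ p ∈ F, p ∈ closure (Set.range f) := by
    intro p hp
    have h2 : (⟨p, hp⟩ : F) ∈ closure (Set.range (denseSeq F)) := denseRange_denseSeq F _
    rw [closure_subtype] at h2
    have : (Subtype.val '' Set.range (denseSeq F)) = Set.range f := by
      rw [← Set.range_comp]; rfl
    rwa [this] at h2
  have hchoice : ∀ k n : ℕ, ∃ a ∈ A, dist a (f k) < 1 / (n + 1) := by
    intro k n
    have hk : f k ∈ closure A := hFA (hfF k)
    rw [Metric.mem_closure_iff] at hk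
    have hpos : (0 : ℝ) < 1 / (n + 1) := by positivity
    obtain ⟨a, ha, hd⟩ := hk _ hpos
    exact ⟨a, ha, by rwa [dist_comm]⟩
  choose g hgA hgd using hchoice
  refine ⟨fun n => g (Nat.unpair n).1 n, fun n => hgA _ _, ?_⟩
  set x : ℕ → X := fun n => g (Nat.unpair n).1 n with hx
  have key : ∀ m : ℕ, dist (x m) (f (Nat.unpair m).1) < 1 / (m + 1) := fun m => hgd _ _
  apply Set.Subset.antisymm
  · intro p hp
    rw [Set.mem_iInter]
    intro n
    have hfk : ∀ k, f k ∈ closure {y : X | ∃ m : ℕ, n ≤ m ∧ y = x m} := by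
      intro k
      rw [Metric.mem_closure_iff]
      intro ε hε
      obtain ⟨N, hN⟩ := exists_nat_one_div_lt hε
      set j := max n N with hj
      set m := Nat.pair k j with hm
      have hjm : j ≤ m := Nat.right_le_pair k j
      have hmn : n ≤ m := le_trans (le_max_left _ _) hjm
      refine ⟨x m, ⟨m, hmn, rfl⟩, ?_⟩
      have hk1 : (Nat.unpair m).1 = k := by rw [hm, Nat.unpair_pair]
      have h1 : dist (x m) (f k) < 1 / (m + 1) := by
        have := key m; rwa [hk1] at this
      have hNm : (N : ℕ) ≤ m := le_trans (le_max_right _ _) hjm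
      have h2 : (1 : ℝ) / (m + 1) ≤ 1 / (N + 1) := by
        apply one_div_le_one_div_of_le
        · positivity
        · have : (N : ℝ) ≤ m := by exact_mod_cast hNm
          linarith
      rw [dist_comm]
      exact lt_of_lt_of_le h1 (le_of_lt (lt_of_le_of_lt h2 hN))
    have hsub : closure (Set.range f) ⊆ closure {y : X | ∃ m : ℕ, n ≤ m ∧ y = x m} := by
      rw [← closure_closure (s := {y : X | ∃ m : ℕ, n ≤ m ∧ y = x m})]
      exact closure_mono (Set.range_subset_iff.2 hfk)
    exact hsub (hdense p hp)
  · intro p hp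
    rw [← hFc.closure_eq, Metric.mem_closure_iff]
    intro ε hε
    obtain ⟨N, hN⟩ := exists_nat_one_div_lt (half_pos hε)
    have hpN : p ∈ closure {y : X | ∃ m : ℕ, N ≤ m ∧ y = x m} := by
      rw [Set.mem_iInter] at hp; exact hp N
    rw [Metric.mem_closure_iff] at hpN
    obtain ⟨y, ⟨m, hmN, hy⟩, hdy⟩ := hpN _ (half_pos hε)
    refine ⟨f (Nat.unpair m).1, hfF _, ?_⟩
    have h1 : dist (x m) (f (Nat.unpair m).1) < 1 / (m + 1) := key m
    have h2 : (1 : ℝ) / (m + 1) ≤ 1 / (N + 1) := by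
      apply one_div_le_one_div_of_le
      · positivity
      · have : (N : ℝ) ≤ m := by exact_mod_cast hmN
        linarith
    calc dist p (f (Nat.unpair m).1) ≤ dist p (x m) + dist (x m) (f (Nat.unpair m).1) :=
          dist_triangle _ _ _
      _ < ε / 2 + 1 / (N + 1) := by
          have hdy' : dist p (x m) < ε / 2 := by rwa [hy] at hdy
          exact add_lt_add_of_lt_of_le hdy' (le_trans (le_of_lt h1) h2)
      _ < ε := by linarith
end

section
/- Let X be a topological space, Y a compact topological space, D ⊆ X and f : D → Y. Then the cluster multifunction f̄, restricted to closure(D), is an upper continuous multifunction whose value f̄(x) is a nonempty compact subset of Y for every x ∈ closure(D). -/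
/-!
The cluster set of `f` at `x` is the set of cluster points of the filter `f (D ∩ 𝓝 x)`, so it
is closed, and it is nonempty by compactness of `Y` as soon as that filter is proper, i.e.
`x ∈ closure D`. For upper continuity: in a compact space, if every cluster point of a filter
lies in an open set `V`, then compactness applied to the filter generated by the closures of its
members gives a member whose closure lies in `V`. Taking that member of the form `f (D ∩ U)`
with `U` an open neighbourhood of `x`, the cluster set at every `u ∈ U` lies in its closure.
-/

open Set Filter Topology

def clusterSet {X Z : Type*} [TopologicalSpace X] [TopologicalSpace Z] {D : Set X}
    (f : D → Z) (x : X) : Set Z :=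
  ⋂ U ∈ nhds x, closure (f '' {d : D | (d : X) ∈ U})

theorem Filter.HasBasis.exists_closure_subset_of_forall_clusterPt {Y ι : Type*}
    [TopologicalSpace Y] [CompactSpace Y] {l : Filter Y} {p : ι → Prop} {s : ι → Set Y}
    (hl : l.HasBasis p s) {V : Set Y} (hV : IsOpen V) (h : ∀ y, ClusterPt y l → y ∈ V) :
    ∃ i, p i ∧ closure (s i) ⊆ V :=
  hl.lift'_closure.mem_iff.1 <| isCompact_univ.adherence_nhdset (le_principal_iff.2 univ_mem) hV
    fun y _ hy => h y (clusterPt_lift'_closure_iff.1 hy)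

section clusterSet

variable {X Y : Type*} [TopologicalSpace X] {D : Set X} (f : D → Y)

theorem hasBasis_map_comap_nhds (x : X) :
    (map f (comap (↑) (𝓝 x))).HasBasis (· ∈ 𝓝 x) fun U => f '' {d : D | (d : X) ∈ U} :=
  ((𝓝 x).basis_sets.comap _).map f

variable [TopologicalSpace Y]

theorem mem_clusterSet_iff {x : X} {y : Y} :
    y ∈ clusterSet f x ↔ MapClusterPt y (comap (↑) (𝓝 x)) f := by
  rw [MapClusterPt, (hasBasis_map_comap_nhds f x).clusterPt_iff_forall_mem_closure]
  simp only [clusterSet, mem_iInter₂]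

theorem clusterSet_subset_closure_image {x : X} {U : Set X} (hU : U ∈ 𝓝 x) :
    clusterSet f x ⊆ closure (f '' {d : D | (d : X) ∈ U}) :=
  biInter_subset_of_mem hU

theorem isClosed_clusterSet (x : X) : IsClosed (clusterSet f x) :=
  isClosed_biInter fun _ _ => isClosed_closure

theorem clusterSet_nonempty [CompactSpace Y] {x : X} (hx : x ∈ closure D) :
    (clusterSet f x).Nonempty := by
  have := mem_closure_iff_comap_neBot.1 hx
  obtain ⟨y, hy⟩ := exists_clusterPt_of_compactSpace (map f (comap (↑) (𝓝 x)))
  exact ⟨y, (mem_clusterSet_iff f).2 hy⟩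

theorem upperHemicontinuous_clusterSet [CompactSpace Y] : UpperHemicontinuous (clusterSet f) := by
  refine .of_forall_isOpen fun x V hV hxV => ?_
  obtain ⟨U, hU, hUV⟩ := (hasBasis_map_comap_nhds f x).exists_closure_subset_of_forall_clusterPt
    hV fun y hy => hxV ((mem_clusterSet_iff f).2 hy)
  filter_upwards [eventually_eventually_nhds.2 hU] with u hu
  exact (clusterSet_subset_closure_image f hu).trans hUV

end clusterSet

/-- Let `X` be a topological space, `Y` a compact topological space,
`D ⊆ X` and `f : D → Y`. Then the cluster multifunction of `f`, restricted to
`closure D`, is an upper continuous multifunction whose value at each `x ∈ closure D`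
is a nonempty compact subset of `Y`. -/
theorem clusterSet_upper_continuous_compact_valued {X Y : Type*} [TopologicalSpace X]
    [TopologicalSpace Y] [CompactSpace Y] (D : Set X) (f : D → Y) :
    (∀ x ∈ closure D, (clusterSet f x).Nonempty ∧ IsCompact (clusterSet f x)) ∧
    (∀ x ∈ closure D, ∀ V : Set Y, IsOpen V → clusterSet f x ⊆ V →
      ∃ U ∈ nhds x, ∀ u ∈ U ∩ closure D, clusterSet f u ⊆ V) := by
  refine ⟨fun x hx => ⟨clusterSet_nonempty f hx, (isClosed_clusterSet f x).isCompact⟩,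
    fun x _ V hV hxV => ?_⟩
  exact ⟨_, (upperHemicontinuous_clusterSet f).forall_isOpen x V hV hxV, fun u hu => hu.1⟩
end

section
/- Let X be a topological space, (Y, d) a compact metric space, D ⊆ X, f : D → Y, and x ∈ closure(D). Then the oscillation of f at x, ω_f(x) = inf_{U ∈ 𝒰_x} diam f(U ∩ D), is equal to the diameter of the cluster set f̄(x). -/
/-!
The cluster set of `f` at `x` is the set of cluster points of the filter generated by the sets
`f (U ∩ D)`. Each member of that filter contains all cluster points in its closure, hence is at
least as wide. Conversely, in a compact space an open set containing every cluster point of a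
filter belongs to the filter; applied to the `ε`-thickening of the cluster set, this produces
members of diameter at most `diam + 2ε`.
-/

open Set

open Filter Metric

section ClusterPts

variable {Y : Type*} [PseudoMetricSpace Y] [CompactSpace Y]

theorem diam_clusterPts_le_of_mem (l : Filter Y) {t : Set Y} (ht : t ∈ l) :
    diam {y | ClusterPt y l} ≤ diam t :=
  (diam_mono (fun _ hy ↦ hy.mem_closure_of_mem _ ht) isBounded_of_compactSpace).trans_eq
    (diam_closure t)

theorem exists_mem_diam_le_diam_clusterPts_add (l : Filter Y) {ε : ℝ} (hε : 0 < ε) :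
    ∃ t ∈ l, diam t ≤ diam {y | ClusterPt y l} + 2 * ε :=
  ⟨thickening ε {y | ClusterPt y l},
    isCompact_univ.adherence_nhdset (le_principal_iff.2 univ_mem) isOpen_thickening
      fun _ _ hy ↦ self_subset_thickening hε _ hy,
    diam_thickening_le _ hε.le⟩

theorem Filter.HasBasis.sInf_diam_eq_diam_iInter_closure {ι : Type*} {l : Filter Y}
    {p : ι → Prop} {s : ι → Set Y} (h : l.HasBasis p s) :
    sInf {r : ℝ | ∃ i, p i ∧ r = diam (s i)} = diam (⋂ i, ⋂ (_ : p i), closure (s i)) := by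
  have hK : ⋂ i, ⋂ (_ : p i), closure (s i) = {y | ClusterPt y l} := by
    ext y
    simp only [mem_iInter, mem_ofPred_eq, h.clusterPt_iff_forall_mem_closure]
  have hbdd : BddBelow {r : ℝ | ∃ i, p i ∧ r = diam (s i)} :=
    ⟨0, by rintro _ ⟨i, -, rfl⟩; exact diam_nonneg⟩
  rw [hK]
  apply le_antisymm
  · refine le_of_forall_pos_le_add fun ε hε ↦ ?_
    obtain ⟨t, ht, hdiam⟩ := exists_mem_diam_le_diam_clusterPts_add l (half_pos hε)
    obtain ⟨i, hi, hst⟩ := h.mem_iff.1 ht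
    calc sInf {r : ℝ | ∃ i, p i ∧ r = diam (s i)} ≤ diam (s i) := csInf_le hbdd ⟨i, hi, rfl⟩
      _ ≤ diam t := diam_mono hst isBounded_of_compactSpace
      _ ≤ diam {y | ClusterPt y l} + ε := by linarith
  · obtain ⟨i₀, hi₀⟩ := h.ex_mem
    refine le_csInf ⟨_, i₀, hi₀, rfl⟩ ?_
    rintro _ ⟨i, hi, rfl⟩
    exact diam_clusterPts_le_of_mem l (h.mem_of_mem hi)

end ClusterPts

theorem oscillation_eq_diam_clusterSet_general {X Y : Type*} [TopologicalSpace X]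
    [MetricSpace Y] [CompactSpace Y] (D : Set X) (f : D → Y) (x : X) :
    sInf {r : ℝ | ∃ U ∈ nhds x, r = Metric.diam (f '' {d : D | (d : X) ∈ U})}
      = Metric.diam (clusterSet f x) :=
  (((nhds x).basis_sets.comap Subtype.val).map f).sInf_diam_eq_diam_iInter_closure

/-- Let `X` be a topological space, `(Y, d)` a compact metric space,
`D ⊆ X`, `f : D → Y` and `x ∈ closure D`. Then the oscillation of `f` at `x`, namely
the infimum over neighborhoods `U` of `x` of the diameters of `f (U ∩ D)`, equals the
diameter of the cluster set of `f` at `x`. -/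
theorem oscillation_eq_diam_clusterSet {X Y : Type*} [TopologicalSpace X]
    [MetricSpace Y] [CompactSpace Y] (D : Set X) (f : D → Y) (x : X)
    (hx : x ∈ closure D) :
    sInf {r : ℝ | ∃ U ∈ nhds x, r = Metric.diam (f '' {d : D | (d : X) ∈ U})}
      = Metric.diam (clusterSet f x) :=
  oscillation_eq_diam_clusterSet_general D f x
end
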